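/- Let F be a field of characteristic zero, and let M be the Lie algebra of derivations of F[x,y,z,t] of the form α·∂/∂x + β·∂/∂y + f(x,y,z)·∂/∂t (α, β ∈ F, f ∈ F[x,y,z]). If V is a finite-dimensional F-subspace of {f(x,y,z)·∂/∂t : f ∈ F[x,y,z]} closed under bracketing with ∂/∂x and ∂/∂y, then L := F⟨∂/∂x, ∂/∂y⟩ + V is a finite-dimensional Lie subalgebra of M, and L is nilpotent. -/

import Mathlib

/-!
Write `L = S ⊕ V` with `S = F∂/∂x + F∂/∂y`. Both `S` and `V` are abelian (partial derivatives
commute, and the coefficients of elements of `V` do not involve `t`), and `[S, V] ⊆ V`, so `L` is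
a Lie subalgebra with `[L, L] ⊆ V`, on which `ad (s + v)` acts as `ad s`. For `s = a∂/∂x + b∂/∂y`,
`ad s` sends `f∂/∂t` to `(s f)∂/∂t`, and `s` lowers the total degree, so each `ad s` is locally
nilpotent on `V`. Engel's theorem for the finite-dimensional `L` concludes.
-/

open MvPolynomial

section Setup

variable (F : Type*) [Field F]

/-- The linear map `f ↦ f·∂/∂t` from `F[x,y,z,t]` into the endomorphisms of
`F[x,y,z,t]` (variables indexed `x=0, y=1, z=2, t=3`). -/
noncomputable def coeffDt :
    MvPolynomial (Fin 4) F →ₗ[F] Module.End F (MvPolynomial (Fin 4) F) where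
  toFun f := (LinearMap.mulLeft F f) ∘ₗ (pderiv (3 : Fin 4) : Derivation F _ _).toLinearMap
  map_add' f g := by ext p; simp [add_mul]
  map_smul' c f := by ext p; simp [smul_mul_assoc]

/-- The subspace `I = { f(x,y,z)·∂/∂t : f ∈ F[x,y,z] }`. -/
noncomputable def Isub : Submodule F (Module.End F (MvPolynomial (Fin 4) F)) :=
  (Subalgebra.toSubmodule
    (MvPolynomial.supported F ({0, 1, 2} : Set (Fin 4)))).map (coeffDt F)

/-- The subspace `M = { α·∂/∂x + β·∂/∂y + f(x,y,z)·∂/∂t }`. -/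
noncomputable def Msub : Submodule F (Module.End F (MvPolynomial (Fin 4) F)) :=
  Submodule.span F
    {((pderiv (0 : Fin 4) : Derivation F _ _).toLinearMap),
     ((pderiv (1 : Fin 4) : Derivation F _ _).toLinearMap)} ⊔ Isub F

end Setup

attribute [local instance 100] LieRing.ofAssociativeRing

namespace LieAlgebra

variable {R L : Type*} [CommRing R] [LieRing L] [LieAlgebra R L] {S V : Submodule R L}

theorem lie_mem_of_mem_sup (hS : ∀ s ∈ S, ∀ s' ∈ S, ⁅s, s'⁆ ∈ V)
    (hSV : ∀ s ∈ S, ∀ v ∈ V, ⁅s, v⁆ ∈ V) (hV : ∀ v ∈ V, ∀ v' ∈ V, ⁅v, v'⁆ ∈ V)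
    {x y : L} (hx : x ∈ S ⊔ V) (hy : y ∈ S ⊔ V) : ⁅x, y⁆ ∈ V := by
  obtain ⟨s, hs, v, hv, rfl⟩ := Submodule.mem_sup.1 hx
  obtain ⟨s', hs', v', hv', rfl⟩ := Submodule.mem_sup.1 hy
  rw [add_lie, lie_add, lie_add, ← lie_skew v s']
  exact add_mem (add_mem (hS s hs s' hs') (hSV s hs v' hv'))
    (add_mem (V.neg_mem (hSV s' hs' v hv)) (hV v hv v' hv'))

theorem exists_ad_pow_eq_zero_of_mem_sup (hS : ∀ s ∈ S, ∀ s' ∈ S, ⁅s, s'⁆ ∈ V)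
    (hSV : ∀ s ∈ S, ∀ v ∈ V, ⁅s, v⁆ ∈ V) (hV : ∀ v ∈ V, ∀ v' ∈ V, ⁅v, v'⁆ = 0)
    (hnil : ∀ s ∈ S, ∀ v ∈ V, ∃ n, (ad R L s ^ n) v = 0)
    {x y : L} (hx : x ∈ S ⊔ V) (hy : y ∈ S ⊔ V) : ∃ n, (ad R L x ^ n) y = 0 := by
  have hxy : ⁅x, y⁆ ∈ V := lie_mem_of_mem_sup hS hSV (fun v hv v' hv' ↦ by
    rw [hV v hv v' hv']; exact V.zero_mem) hx hy
  obtain ⟨s, hs, v, hv, rfl⟩ := Submodule.mem_sup.1 hx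
  have h_ad_pow : ∀ n, ∀ w ∈ V, (ad R L (s + v) ^ n) w = (ad R L s ^ n) w := by
    intro n
    induction n with
    | zero => exact fun w _ ↦ rfl
    | succ n ih =>
      intro w hw
      have h_ad : ad R L (s + v) w = ad R L s w := by
        rw [ad_apply, ad_apply, add_lie, hV v hv w hw, add_zero]
      rw [pow_succ, pow_succ, Module.End.mul_apply, Module.End.mul_apply, h_ad]
      exact ih _ (hSV s hs w hw)
  obtain ⟨n, hn⟩ := hnil s hs _ hxy
  exact ⟨n + 1, by rw [pow_succ, Module.End.mul_apply, ad_apply, h_ad_pow n _ hxy, hn]⟩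

end LieAlgebra

theorem LieSubalgebra.isNilpotent_of_forall_exists_ad_pow_eq_zero {R L : Type*} [CommRing R]
    [LieRing L] [LieAlgebra R L] (K : LieSubalgebra R L) [IsNoetherian R K]
    (h : ∀ x ∈ K, ∀ y ∈ K, ∃ n, (LieAlgebra.ad R L x ^ n) y = 0) : LieRing.IsNilpotent K := by
  rw [LieAlgebra.isNilpotent_iff_forall (R := R)]
  refine fun x ↦ Module.End.isNilpotent_iff_of_finite.2 fun y ↦ ?_
  obtain ⟨n, hn⟩ := h x x.2 y y.2
  exact ⟨n, Subtype.ext (by rw [LieSubalgebra.coe_ad_pow, hn]; rfl)⟩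

namespace MvPolynomial

variable {σ R : Type*} [CommSemiring R]

theorem pderiv_pderiv_comm (i j : σ) (p : MvPolynomial σ R) :
    pderiv i (pderiv j p) = pderiv j (pderiv i p) := by
  classical
  induction p using MvPolynomial.induction_on' with
  | add p q hp hq => simp [hp, hq]
  | monomial s a =>
    rcases eq_or_ne i j with rfl | hij
    · rfl
    · simp only [pderiv_monomial, Finsupp.tsub_apply, Finsupp.single_eq_of_ne hij,
        Finsupp.single_eq_of_ne hij.symm, Nat.sub_zero]
      rw [tsub_right_comm]
      ring_nf

theorem pderiv_mem_restrictTotalDegree (i : σ) {n : ℕ} {f : MvPolynomial σ R}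
    (hf : f ∈ restrictTotalDegree σ R (n + 1)) : pderiv i f ∈ restrictTotalDegree σ R n := by
  classical
  rw [restrictTotalDegree, mem_restrictSupport_iff] at hf ⊢
  intro m hm
  have hm' : m + Finsupp.single i 1 ∈ f.support := by
    rw [Finset.mem_coe, mem_support_iff, coeff_pderiv] at hm
    exact mem_support_iff.2 (left_ne_zero_of_mul hm)
  have h_deg : ((m + Finsupp.single i 1).sum fun _ e ↦ e) = (m.sum fun _ e ↦ e) + 1 := by
    rw [Finsupp.sum_add_index' (fun _ ↦ rfl) (fun _ _ _ ↦ rfl), Finsupp.sum_single_index rfl]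
  have := hf hm'
  simp only [Set.mem_ofPred_eq, h_deg] at this ⊢
  omega

variable (σ R) in
noncomputable abbrev spanPderiv : Submodule R (Module.End R (MvPolynomial σ R)) :=
  Submodule.span R (Set.range fun i : σ ↦ (pderiv i : Derivation R _ _).toLinearMap)

theorem commute_of_mem_spanPderiv {D D' : Module.End R (MvPolynomial σ R)}
    (hD : D ∈ spanPderiv σ R) (hD' : D' ∈ spanPderiv σ R) : Commute D D' := by
  induction hD using Submodule.span_induction with
  | mem D hD =>
    obtain ⟨i, rfl⟩ := hD
    induction hD' using Submodule.span_induction with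
    | mem D' hD' => obtain ⟨j, rfl⟩ := hD'; exact LinearMap.ext (pderiv_pderiv_comm i j)
    | zero => exact Commute.zero_right _
    | add _ _ _ _ h h' => exact h.add_right h'
    | smul a _ _ h => exact h.smul_right a
  | zero => exact Commute.zero_left _
  | add _ _ _ _ h h' => exact h.add_left h'
  | smul a _ _ h => exact h.smul_left a

theorem apply_C_eq_zero_of_mem_spanPderiv {D : Module.End R (MvPolynomial σ R)}
    (hD : D ∈ spanPderiv σ R) (c : R) : D (C c) = 0 := by
  induction hD using Submodule.span_induction with
  | mem D hD => obtain ⟨i, rfl⟩ := hD; exact pderiv_C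
  | zero => rfl
  | add D D' _ _ h h' => simp [h, h']
  | smul a D _ h => simp [h]

theorem apply_mem_restrictTotalDegree_of_mem_spanPderiv {D : Module.End R (MvPolynomial σ R)}
    (hD : D ∈ spanPderiv σ R) {n : ℕ} {f : MvPolynomial σ R}
    (hf : f ∈ restrictTotalDegree σ R (n + 1)) : D f ∈ restrictTotalDegree σ R n := by
  induction hD using Submodule.span_induction with
  | mem D hD => obtain ⟨i, rfl⟩ := hD; exact pderiv_mem_restrictTotalDegree i hf
  | zero => exact Submodule.zero_mem _
  | add D D' _ _ h h' => exact add_mem h h'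
  | smul a D _ h => exact Submodule.smul_mem _ a h

theorem pow_apply_eq_zero_of_mem_spanPderiv {D : Module.End R (MvPolynomial σ R)}
    (hD : D ∈ spanPderiv σ R) {n : ℕ} {f : MvPolynomial σ R}
    (hf : f ∈ restrictTotalDegree σ R n) : (D ^ (n + 1)) f = 0 := by
  induction n generalizing f with
  | zero =>
    rw [totalDegree_eq_zero_iff_eq_C.1 (Nat.le_zero.1 ((mem_restrictTotalDegree σ _ _).1 hf))]
    exact apply_C_eq_zero_of_mem_spanPderiv hD _
  | succ n ih =>
    rw [pow_succ, Module.End.mul_apply]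
    exact ih (apply_mem_restrictTotalDegree_of_mem_spanPderiv hD hf)

end MvPolynomial

section VectorFields

variable {F : Type*} [Field F]

theorem lie_pderiv_coeffDt (i : Fin 4) (f : MvPolynomial (Fin 4) F) :
    ⁅((pderiv i : Derivation F _ _).toLinearMap : Module.End F (MvPolynomial (Fin 4) F)),
      coeffDt F f⁆ = coeffDt F (pderiv i f) := by
  refine LinearMap.ext fun p ↦ ?_
  simp only [Ring.lie_def, LinearMap.sub_apply, Module.End.mul_apply, coeffDt, LinearMap.coe_mk,
    AddHom.coe_mk, LinearMap.coe_comp, Function.comp_apply, Derivation.coeFn_coe,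
    LinearMap.mulLeft_apply, Derivation.leibniz, smul_eq_mul, pderiv_pderiv_comm i 3]
  ring

theorem lie_coeffDt_of_mem_spanPderiv {D : Module.End F (MvPolynomial (Fin 4) F)}
    (hD : D ∈ spanPderiv (Fin 4) F) (f : MvPolynomial (Fin 4) F) :
    ⁅D, coeffDt F f⁆ = coeffDt F (D f) := by
  induction hD using Submodule.span_induction with
  | mem D hD => obtain ⟨i, rfl⟩ := hD; exact lie_pderiv_coeffDt i f
  | zero => simp
  | add D D' _ _ h h' => simp [add_lie, h, h']
  | smul a D _ h => simp [smul_lie, h]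

theorem ad_pow_coeffDt_of_mem_spanPderiv {D : Module.End F (MvPolynomial (Fin 4) F)}
    (hD : D ∈ spanPderiv (Fin 4) F) (n : ℕ) (f : MvPolynomial (Fin 4) F) :
    (LieAlgebra.ad F _ D ^ n) (coeffDt F f) = coeffDt F ((D ^ n) f) := by
  induction n generalizing f with
  | zero => rfl
  | succ n ih =>
    rw [pow_succ, pow_succ, Module.End.mul_apply, Module.End.mul_apply, LieAlgebra.ad_apply,
      lie_coeffDt_of_mem_spanPderiv hD, ih]

theorem ad_pow_totalDegree_succ_coeffDt_eq_zero {D : Module.End F (MvPolynomial (Fin 4) F)}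
    (hD : D ∈ spanPderiv (Fin 4) F) (f : MvPolynomial (Fin 4) F) :
    (LieAlgebra.ad F _ D ^ (f.totalDegree + 1)) (coeffDt F f) = 0 := by
  rw [ad_pow_coeffDt_of_mem_spanPderiv hD,
    pow_apply_eq_zero_of_mem_spanPderiv hD ((mem_restrictTotalDegree _ _ _).2 le_rfl), map_zero]

theorem pderiv_three_eq_zero_of_mem_supported {f : MvPolynomial (Fin 4) F}
    (hf : f ∈ supported F ({0, 1, 2} : Set (Fin 4))) : pderiv 3 f = 0 :=
  pderiv_eq_zero_of_notMem_vars fun h3 ↦ by simpa using mem_supported.1 hf h3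

theorem lie_eq_zero_of_mem_Isub {D D' : Module.End F (MvPolynomial (Fin 4) F)}
    (hD : D ∈ Isub F) (hD' : D' ∈ Isub F) : ⁅D, D'⁆ = 0 := by
  obtain ⟨f, hf, rfl⟩ := hD
  obtain ⟨g, hg, rfl⟩ := hD'
  refine LinearMap.ext fun p ↦ ?_
  simp only [Ring.lie_def, LinearMap.sub_apply, Module.End.mul_apply, coeffDt, LinearMap.coe_mk,
    AddHom.coe_mk, LinearMap.coe_comp, Function.comp_apply, Derivation.coeFn_coe,
    LinearMap.mulLeft_apply, LinearMap.zero_apply, Derivation.leibniz, smul_eq_mul,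
    pderiv_three_eq_zero_of_mem_supported hf, pderiv_three_eq_zero_of_mem_supported hg]
  ring

end VectorFields

set_option synthInstance.maxHeartbeats 1000000 in
theorem stmt_16_general (F : Type*) [Field F]
    (V : Submodule F (Module.End F (MvPolynomial (Fin 4) F)))
    (hVI : V ≤ Isub F) [FiniteDimensional F V]
    (hVx : ∀ D ∈ V,
      ⁅((pderiv (0 : Fin 4) : Derivation F _ _).toLinearMap :
          Module.End F (MvPolynomial (Fin 4) F)), D⁆ ∈ V)
    (hVy : ∀ D ∈ V,
      ⁅((pderiv (1 : Fin 4) : Derivation F _ _).toLinearMap :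
          Module.End F (MvPolynomial (Fin 4) F)), D⁆ ∈ V) :
    ∃ K : LieSubalgebra F (Module.End F (MvPolynomial (Fin 4) F)),
      K.toSubmodule =
        Submodule.span F
          {((pderiv (0 : Fin 4) : Derivation F _ _).toLinearMap),
           ((pderiv (1 : Fin 4) : Derivation F _ _).toLinearMap)} ⊔ V ∧
      K.toSubmodule ≤ Msub F ∧
      FiniteDimensional F K ∧
      LieRing.IsNilpotent K := by
  set S := Submodule.span F
    {((pderiv (0 : Fin 4) : Derivation F _ _).toLinearMap : Module.End F (MvPolynomial (Fin 4) F)),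
     ((pderiv (1 : Fin 4) : Derivation F _ _).toLinearMap)}
  have hS_le : S ≤ spanPderiv (Fin 4) F :=
    Submodule.span_mono (by rintro _ (rfl | rfl) <;> exact ⟨_, rfl⟩)
  have hS : ∀ s ∈ S, ∀ s' ∈ S, ⁅s, s'⁆ ∈ V := fun s hs s' hs' ↦
    (commute_of_mem_spanPderiv (hS_le hs) (hS_le hs')).lie_eq ▸ V.zero_mem
  have hSV : ∀ s ∈ S, ∀ v ∈ V, ⁅s, v⁆ ∈ V := by
    intro s hs v hv
    obtain ⟨a, b, rfl⟩ := Submodule.mem_span_pair.1 hs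
    rw [add_lie, smul_lie, smul_lie]
    exact add_mem (V.smul_mem a (hVx v hv)) (V.smul_mem b (hVy v hv))
  have hV : ∀ v ∈ V, ∀ v' ∈ V, ⁅v, v'⁆ = 0 := fun v hv v' hv' ↦
    lie_eq_zero_of_mem_Isub (hVI hv) (hVI hv')
  have hnil : ∀ s ∈ S, ∀ v ∈ V, ∃ n, (LieAlgebra.ad F _ s ^ n) v = 0 := by
    rintro s hs _ hv
    obtain ⟨f, -, rfl⟩ := hVI hv
    exact ⟨_, ad_pow_totalDegree_succ_coeffDt_eq_zero (hS_le hs) f⟩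
  let K : LieSubalgebra F (Module.End F (MvPolynomial (Fin 4) F)) :=
    { toSubmodule := S ⊔ V
      lie_mem' := fun hx hy ↦ Submodule.mem_sup_right <| LieAlgebra.lie_mem_of_mem_sup hS hSV
        (fun v hv v' hv' ↦ hV v hv v' hv' ▸ V.zero_mem) hx hy }
  have : FiniteDimensional F S := FiniteDimensional.span_of_finite F (Set.toFinite _)
  have hK : FiniteDimensional F K := Submodule.finiteDimensional_sup S V
  exact ⟨K, rfl, sup_le_sup_left hVI _, hK, K.isNilpotent_of_forall_exists_ad_pow_eq_zero
    fun x hx y hy ↦ LieAlgebra.exists_ad_pow_eq_zero_of_mem_sup hS hSV hV hnil hx hy⟩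

set_option synthInstance.maxHeartbeats 1000000 in
theorem stmt_16 (F : Type*) [Field F] [CharZero F]
    (V : Submodule F (Module.End F (MvPolynomial (Fin 4) F)))
    (hVI : V ≤ Isub F) [FiniteDimensional F V]
    (hVx : ∀ D ∈ V,
      ⁅((pderiv (0 : Fin 4) : Derivation F _ _).toLinearMap :
          Module.End F (MvPolynomial (Fin 4) F)), D⁆ ∈ V)
    (hVy : ∀ D ∈ V,
      ⁅((pderiv (1 : Fin 4) : Derivation F _ _).toLinearMap :
          Module.End F (MvPolynomial (Fin 4) F)), D⁆ ∈ V) :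
    ∃ K : LieSubalgebra F (Module.End F (MvPolynomial (Fin 4) F)),
      K.toSubmodule =
        Submodule.span F
          {((pderiv (0 : Fin 4) : Derivation F _ _).toLinearMap),
           ((pderiv (1 : Fin 4) : Derivation F _ _).toLinearMap)} ⊔ V ∧
      K.toSubmodule ≤ Msub F ∧
      FiniteDimensional F K ∧
      LieRing.IsNilpotent K :=
  stmt_16_general F V hVI hVx hVy
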